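/- arXiv:1902.08016 — 2 statements merged into one kernel-verified Lean document; each statement's English description precedes it below -/
import Mathlib

section
/- For any probability measures μ and ν on a finite set Ω, the variational formula sup_f { ∫ f dμ - log ∫ e^f dν } (supremum over all real-valued functions f on Ω) equals ∫ (dμ/dν) log(dμ/dν) dν when μ is absolutely continuous with respect to ν, and equals +∞ otherwise. -/
open Finset

-- Z positivity
lemma aux_Zpos {Ω : Type*} [Fintype Ω] (ν : Ω → ℝ) (hν0 : ∀ x, 0 ≤ ν x)
    (hν1 : ∑ x, ν x = 1) (f : Ω → ℝ) :
    0 < ∑ x, ν x * Real.exp (f x) := by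
  obtain ⟨x0, hx0⟩ : ∃ x, ν x ≠ 0 := by
    by_contra h
    push_neg at h
    simp [h] at hν1
  have h1 : ν x0 * Real.exp (f x0) ≤ ∑ x, ν x * Real.exp (f x) :=
    Finset.single_le_sum (f := fun x => ν x * Real.exp (f x))
      (fun x _ => mul_nonneg (hν0 x) (Real.exp_pos _).le) (Finset.mem_univ x0)
  have : 0 < ν x0 * Real.exp (f x0) := by
    have := (hν0 x0).lt_of_ne (Ne.symm hx0)
    positivity

  linarith

-- upper bound
lemma aux_upper {Ω : Type*} [Fintype Ω]
    (μ ν : Ω → ℝ) (hμ0 : ∀ x, 0 ≤ μ x) (hν0 : ∀ x, 0 ≤ ν x)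
    (hμ1 : ∑ x, μ x = 1) (hν1 : ∑ x, ν x = 1)
    (hac : ∀ x, ν x = 0 → μ x = 0) (f : Ω → ℝ) :
    ∑ x, μ x * f x - Real.log (∑ x, ν x * Real.exp (f x))
      ≤ ∑ x, ν x * ((μ x / ν x) * Real.log (μ x / ν x)) := by
  set Z := ∑ x, ν x * Real.exp (f x) with hZ
  have hZpos : 0 < Z := aux_Zpos ν hν0 hν1 f
  have key : ∀ x, μ x * f x ≤
      ν x * ((μ x / ν x) * Real.log (μ x / ν x)) + μ x * Real.log Z
        + (ν x * Real.exp (f x) / Z - μ x) := by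
    intro x
    rcases (hμ0 x).eq_or_lt with h | h
    · rw [← h]
      have : (0:ℝ)/ν x = 0 := zero_div _
      simp [← h, this]
      exact div_nonneg (mul_nonneg (hν0 x) (Real.exp_pos _).le) hZpos.le
    · have hν : 0 < ν x := by
        rcases (hν0 x).eq_or_lt with h' | h'
        · exact absurd (hac x h'.symm) (by linarith)
        · exact h'
      have hlog : Real.log (ν x * Real.exp (f x) / (μ x * Z))
          ≤ ν x * Real.exp (f x) / (μ x * Z) - 1 :=
        Real.log_le_sub_one_of_pos
          (div_pos (mul_pos hν (Real.exp_pos _)) (mul_pos h hZpos))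
      rw [Real.log_div (by positivity) (by positivity), Real.log_mul (by positivity) (Real.exp_ne_zero _),
        Real.log_mul (by positivity) (by positivity), Real.log_exp] at hlog
      have h2 : ν x * ((μ x / ν x) * Real.log (μ x / ν x))
          = μ x * (Real.log (μ x) - Real.log (ν x)) := by
        rw [Real.log_div (by positivity) (by positivity)]
        field_simp
      rw [h2]
      have h3 : μ x * (ν x * Real.exp (f x) / (μ x * Z)) = ν x * Real.exp (f x) / Z := by
        field_simp
      nlinarith [mul_le_mul_of_nonneg_left hlog (le_of_lt h)]
  have hsum : ∑ x, μ x * f x ≤ ∑ x, ν x * ((μ x / ν x) * Real.log (μ x / ν x)) + Real.log Z := by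
    calc ∑ x, μ x * f x ≤ ∑ x, (ν x * ((μ x / ν x) * Real.log (μ x / ν x)) + μ x * Real.log Z
        + (ν x * Real.exp (f x) / Z - μ x)) := Finset.sum_le_sum (fun x _ => key x)
      _ = ∑ x, ν x * ((μ x / ν x) * Real.log (μ x / ν x)) + Real.log Z := by
          rw [Finset.sum_add_distrib, Finset.sum_add_distrib, ← Finset.sum_mul, hμ1,
            Finset.sum_sub_distrib, ← Finset.sum_div, ← hZ, hμ1, div_self hZpos.ne']
          ring
  linarith

lemma aux_lower {Ω : Type*} [Fintype Ω]
    (μ ν : Ω → ℝ) (hμ0 : ∀ x, 0 ≤ μ x) (hν0 : ∀ x, 0 ≤ ν x)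
    (hμ1 : ∑ x, μ x = 1) (hν1 : ∑ x, ν x = 1)
    (hac : ∀ x, ν x = 0 → μ x = 0) {ε : ℝ} (hε : 0 < ε) :
    ∃ f : Ω → ℝ, (∑ x, ν x * ((μ x / ν x) * Real.log (μ x / ν x))) - ε
      ≤ ∑ x, μ x * f x - Real.log (∑ x, ν x * Real.exp (f x)) := by
  classical
  refine ⟨fun x => if μ x = 0 then Real.log ε else Real.log (μ x / ν x), ?_⟩
  set f : Ω → ℝ := fun x => if μ x = 0 then Real.log ε else Real.log (μ x / ν x) with hf
  have hνpos : ∀ x, μ x ≠ 0 → 0 < ν x := by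
    intro x hx
    rcases (hν0 x).eq_or_lt with h' | h'
    · exact absurd (hac x h'.symm) hx
    · exact h'
  have hμνpos : ∀ x, μ x ≠ 0 → 0 < μ x / ν x := fun x hx =>
    div_pos ((hμ0 x).lt_of_ne (Ne.symm hx)) (hνpos x hx)
  have h1 : ∑ x, μ x * f x = ∑ x, ν x * ((μ x / ν x) * Real.log (μ x / ν x)) := by
    apply Finset.sum_congr rfl
    intro x _
    by_cases hx : μ x = 0
    · simp [hf, hx, zero_div]
    · have hν := hνpos x hx
      simp only [hf, if_neg hx]
      field_simp
  have h2 : ∀ x, ν x * Real.exp (f x) ≤ μ x + ε * ν x := by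
    intro x
    by_cases hx : μ x = 0
    · simp only [hf, if_pos hx, Real.exp_log hε, hx]
      linarith [mul_nonneg (hν0 x) hε.le]
    · simp only [hf, if_neg hx, Real.exp_log (hμνpos x hx)]
      have hν := hνpos x hx
      have : ν x * (μ x / ν x) = μ x := by field_simp
      rw [this]
      nlinarith [hν0 x, hε.le]
  have hZle : ∑ x, ν x * Real.exp (f x) ≤ 1 + ε := by
    calc ∑ x, ν x * Real.exp (f x) ≤ ∑ x, (μ x + ε * ν x) :=
          Finset.sum_le_sum (fun x _ => h2 x)
      _ = 1 + ε := by rw [Finset.sum_add_distrib, hμ1, ← Finset.mul_sum, hν1, mul_one]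
  have hZpos : 0 < ∑ x, ν x * Real.exp (f x) := aux_Zpos ν hν0 hν1 f
  have hlogZ : Real.log (∑ x, ν x * Real.exp (f x)) ≤ ε := by
    have := Real.log_le_sub_one_of_pos hZpos
    linarith
  rw [h1]
  linarith

/-- Variational formula for relative entropy on a finite set. -/
theorem stmt0 {Ω : Type*} [Fintype Ω]
    (μ ν : Ω → ℝ) (hμ0 : ∀ x, 0 ≤ μ x) (hν0 : ∀ x, 0 ≤ ν x)
    (hμ1 : ∑ x, μ x = 1) (hν1 : ∑ x, ν x = 1) :
    ((∀ x, ν x = 0 → μ x = 0) →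
      (⨆ f : Ω → ℝ,
        ((∑ x, μ x * f x - Real.log (∑ x, ν x * Real.exp (f x)) : ℝ) : EReal))
        = ((∑ x, ν x * ((μ x / ν x) * Real.log (μ x / ν x)) : ℝ) : EReal)) ∧
    (¬ (∀ x, ν x = 0 → μ x = 0) →
      (⨆ f : Ω → ℝ,
        ((∑ x, μ x * f x - Real.log (∑ x, ν x * Real.exp (f x)) : ℝ) : EReal)) = ⊤) := by
  classical
  constructor
  · intro hac
    apply le_antisymm
    · exact iSup_le fun f => EReal.coe_le_coe_iff.2 (aux_upper μ ν hμ0 hν0 hμ1 hν1 hac f)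
    · apply le_of_forall_lt
      intro c hc
      obtain ⟨r, hr1, hr2⟩ := EReal.exists_between_coe_real hc
      have hrT : r < ∑ x, ν x * ((μ x / ν x) * Real.log (μ x / ν x)) :=
        EReal.coe_lt_coe_iff.1 hr2
      obtain ⟨f, hfv⟩ := aux_lower μ ν hμ0 hν0 hμ1 hν1 hac
        (show (0:ℝ) < (∑ x, ν x * ((μ x / ν x) * Real.log (μ x / ν x))) - r by linarith)
      refine hr1.trans_le ?_
      calc (r : EReal) ≤ ((∑ x, μ x * f x - Real.log (∑ x, ν x * Real.exp (f x)) : ℝ) : EReal) :=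
            EReal.coe_le_coe_iff.2 (by linarith)
        _ ≤ _ := le_iSup (fun f : Ω → ℝ =>
            ((∑ x, μ x * f x - Real.log (∑ x, ν x * Real.exp (f x)) : ℝ) : EReal)) f
  · intro h
    push_neg at h
    obtain ⟨x0, hx0, hμx0⟩ := h
    have hμpos : 0 < μ x0 := (hμ0 x0).lt_of_ne (Ne.symm hμx0)
    rw [eq_top_iff]
    apply le_of_forall_lt
    intro c hc
    obtain ⟨r, hr1, -⟩ := EReal.exists_between_coe_real hc
    obtain ⟨n, hn⟩ := exists_nat_gt (r / μ x0)
    set f : Ω → ℝ := fun x => if x = x0 then (n : ℝ) else 0 with hf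
    have hsum : ∑ x, μ x * f x = μ x0 * n := by
      rw [hf]
      simp only [mul_ite, mul_zero]
      rw [Finset.sum_ite_eq' Finset.univ x0 (fun x => μ x * (n:ℝ))]
      simp
    have hZ : ∑ x, ν x * Real.exp (f x) = 1 := by
      rw [← hν1]
      apply Finset.sum_congr rfl
      intro x _
      by_cases hx : x = x0
      · simp [hf, hx, hx0]
      · simp [hf, hx]
    have hval : r < ∑ x, μ x * f x - Real.log (∑ x, ν x * Real.exp (f x)) := by
      rw [hsum, hZ, Real.log_one]
      rw [div_lt_iff₀ hμpos] at hn
      linarith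
    refine hr1.trans_le ?_
    calc (r : EReal) ≤ ((∑ x, μ x * f x - Real.log (∑ x, ν x * Real.exp (f x)) : ℝ) : EReal) :=
          EReal.coe_le_coe_iff.2 hval.le
      _ ≤ _ := le_iSup (fun f : Ω → ℝ =>
          ((∑ x, μ x * f x - Real.log (∑ x, ν x * Real.exp (f x)) : ℝ) : EReal)) f
end

section
/- Let ν₁, ν₂ be the Bernoulli product measures on {0,1}^T with marginal densities u₁ⁿ(x) = u(x) + κₙ u₁(x) and u₂ⁿ(x) = u(x) + κₙ u₂(x) respectively, where T is a finite set, κₙ → 0, and δ ≤ u(x) ≤ 1−δ for all x. Then the relative entropy satisfies H(ν₂|ν₁) = (κₙ²/2) Σ_x [u₂(x) − u₁(x)]²/χ(u(x)) + Rₙ, where χ(ρ) = ρ(1−ρ) and |Rₙ| ≤ C₀ κₙ³ |T| for a constant C₀ depending only on δ and the sup-norms of u₁, u₂. -/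
/-!
Both measures are products, so the relative entropy is the sum over sites of the relative entropy
`bernoulliKL a b` of two Bernoulli laws. With `a = b + s`, expanding `log (1 + s / b)` and
`log (1 - s / (1 - b))` to second order gives `bernoulliKL a b = s² / (2 b (1 - b)) + O(s³)`.
Here `s = κₙ (u₂ - u₁)`, and replacing `b = u + κₙ u₁` by `u` in `b (1 - b)` costs another
`O(κₙ³)`. This gives the bound with a constant depending only on `δ` and `M` once `κₙ` is small;
the finitely many remaining `n` only enlarge the constant.
-/

open Real Finset Filter

theorem sum_pi_prod_mul_apply {T β R : Type*} [Fintype T] [DecidableEq T] [Fintype β]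
    [CommSemiring R] (p : T → β → R) (hp : ∀ y, ∑ c, p y c = 1) (x : T) (g : β → R) :
    ∑ η : T → β, (∏ y, p y (η y)) * g (η x) = ∑ c, p x c * g c := by
  have hsplit : ∀ η : T → β, (∏ y, p y (η y)) * g (η x)
      = ∏ y, p y (η y) * (if y = x then g (η y) else 1) := fun η => by
    rw [prod_mul_distrib, prod_ite_eq']
    simp
  rw [sum_congr rfl fun η _ => hsplit η,
    ← Fintype.prod_sum fun y c => p y c * if y = x then g c else 1,
    prod_eq_single x (fun y _ hy => by simp [hy, hp y]) (by simp)]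
  simp

noncomputable def bernoulliKL (a b : ℝ) : ℝ :=
  a * log (a / b) + (1 - a) * log ((1 - a) / (1 - b))

theorem sum_prod_mul_log_div_prod_eq_sum_bernoulliKL {T : Type*} [Fintype T] [DecidableEq T]
    (a b : T → ℝ) (ha : ∀ x, 0 < a x ∧ a x < 1) (hb : ∀ x, 0 < b x ∧ b x < 1) :
    ∑ η : T → Bool, (∏ x, (if η x then a x else 1 - a x)) *
        log ((∏ x, (if η x then a x else 1 - a x)) / (∏ x, (if η x then b x else 1 - b x)))
      = ∑ x, bernoulliKL (a x) (b x) := by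
  set p : T → Bool → ℝ := fun x c => if c then a x else 1 - a x
  set q : T → Bool → ℝ := fun x c => if c then b x else 1 - b x
  have hp : ∀ x c, 0 < p x c := fun x c => by cases c <;> simp [p] <;> linarith [ha x]
  have hq : ∀ x c, 0 < q x c := fun x c => by cases c <;> simp [q] <;> linarith [hb x]
  have hlog : ∀ η : T → Bool,
      log ((∏ x, p x (η x)) / ∏ x, q x (η x)) = ∑ x, log (p x (η x) / q x (η x)) := fun η => by
    rw [← prod_div_distrib, log_prod fun x _ => (div_pos (hp x (η x)) (hq x (η x))).ne']
  calc ∑ η : T → Bool, (∏ x, p x (η x)) * log ((∏ x, p x (η x)) / ∏ x, q x (η x))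
      = ∑ x, ∑ η : T → Bool, (∏ y, p y (η y)) * log (p x (η x) / q x (η x)) := by
        simp_rw [hlog, mul_sum]
        exact sum_comm
    _ = ∑ x, bernoulliKL (a x) (b x) := by
        refine sum_congr rfl fun x _ => ?_
        rw [sum_pi_prod_mul_apply p (fun y => by simp [p]) x (fun c => log (p x c / q x c)),
          Fintype.sum_bool]
        simp [p, q, bernoulliKL]

theorem abs_log_one_add_sub_le {t : ℝ} (ht : |t| ≤ 1 / 2) :
    |log (1 + t) - (t - t ^ 2 / 2)| ≤ 2 * |t| ^ 3 := by
  have h := abs_log_sub_add_sum_range_le (x := -t) (by rw [abs_neg]; linarith) 2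
  simp only [sum_range_succ, sum_range_zero, abs_neg, sub_neg_eq_add] at h
  have hrem : |t| ^ (2 + 1) / (1 - |t|) ≤ 2 * |t| ^ 3 := by
    rw [div_le_iff₀ (by linarith), show 2 + 1 = 3 from rfl]
    nlinarith [mul_nonneg (pow_nonneg (abs_nonneg t) 3) (by linarith : (0 : ℝ) ≤ 1 - 2 * |t|)]
  calc |log (1 + t) - (t - t ^ 2 / 2)| = _ := by congr 1; push_cast; ring
    _ ≤ _ := h.trans hrem

theorem bernoulliKL_add_sub_eq {b s p q : ℝ} (hb : b ≠ 0) (hb' : b ≠ 1) (hp : s = b * p)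
    (hq : s = -((1 - b) * q)) :
    bernoulliKL (b + s) b - s ^ 2 / 2 * (b * (1 - b))⁻¹
      = (b + s) * (log (1 + p) - (p - p ^ 2 / 2))
        + (1 - (b + s)) * (log (1 + q) - (q - q ^ 2 / 2))
        - b * p ^ 3 / 2 - (1 - b) * q ^ 3 / 2 := by
  have hb1 : 1 - b ≠ 0 := sub_ne_zero.2 hb'.symm
  have hp' : (b + s) / b = 1 + p := by rw [hp]; field_simp
  have hq' : (1 - (b + s)) / (1 - b) = 1 + q := by rw [hq]; field_simp; ring
  rw [bernoulliKL, hp', hq']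
  subst hp
  have hq'' : q = -(b * p / (1 - b)) := by field_simp; linarith
  subst hq''
  field_simp
  ring

theorem abs_bernoulliKL_add_sub_le {b s : ℝ} (hb : 0 < b) (hb' : b < 1) (hp : |s / b| ≤ 1 / 2)
    (hq : |s / (1 - b)| ≤ 1 / 2) :
    |bernoulliKL (b + s) b - s ^ 2 / 2 * (b * (1 - b))⁻¹|
      ≤ 3 * (|s / b| ^ 3 + |s / (1 - b)| ^ 3) := by
  rw [← abs_neg (s / (1 - b))] at hq ⊢
  set p := s / b
  set q := -(s / (1 - b))
  have hb1 : 0 < 1 - b := by linarith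
  have hps : s = b * p := by simp only [p]; field_simp
  have hqs : s = -((1 - b) * q) := by simp only [q]; field_simp
  have hp' := abs_le.1 hp
  have hq' := abs_le.1 hq
  have ha : 0 < b + s := by nlinarith
  have ha1 : 0 < 1 - (b + s) := by nlinarith
  have hE₁ := abs_log_one_add_sub_le hp
  have hE₂ := abs_log_one_add_sub_le hq
  have hlin₁ : |(b + s) * (log (1 + p) - (p - p ^ 2 / 2))| ≤ 2 * |p| ^ 3 := by
    rw [abs_mul, abs_of_pos ha]
    nlinarith [abs_nonneg (log (1 + p) - (p - p ^ 2 / 2))]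
  have hlin₂ : |(1 - (b + s)) * (log (1 + q) - (q - q ^ 2 / 2))| ≤ 2 * |q| ^ 3 := by
    rw [abs_mul, abs_of_pos ha1]
    nlinarith [abs_nonneg (log (1 + q) - (q - q ^ 2 / 2))]
  have hcub₁ : |b * p ^ 3 / 2| ≤ |p| ^ 3 / 2 := by
    rw [abs_div, abs_mul, abs_pow, abs_of_pos hb, abs_two]
    gcongr
    nlinarith [pow_nonneg (abs_nonneg p) 3]
  have hcub₂ : |(1 - b) * q ^ 3 / 2| ≤ |q| ^ 3 / 2 := by
    rw [abs_div, abs_mul, abs_pow, abs_of_pos hb1, abs_two]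
    gcongr
    nlinarith [pow_nonneg (abs_nonneg q) 3]
  rw [bernoulliKL_add_sub_eq hb.ne' hb'.ne hps hqs]
  calc _ ≤ |(b + s) * (log (1 + p) - (p - p ^ 2 / 2))|
        + |(1 - (b + s)) * (log (1 + q) - (q - q ^ 2 / 2))|
        + |b * p ^ 3 / 2| + |(1 - b) * q ^ 3 / 2| :=
        (abs_sub _ _).trans <| add_le_add_left ((abs_sub _ _).trans <|
          add_le_add_left (abs_add_le _ _) _) _
    _ ≤ 3 * (|p| ^ 3 + |q| ^ 3) := by
        nlinarith [pow_nonneg (abs_nonneg p) 3, pow_nonneg (abs_nonneg q) 3]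

theorem abs_inv_mul_one_sub_sub_inv_mul_one_sub_le {δ b u : ℝ} (hδ : 0 < δ) (hb : δ ≤ b)
    (hb' : b ≤ 1 - δ) (hu : δ ≤ u) (hu' : u ≤ 1 - δ) :
    |(b * (1 - b))⁻¹ - (u * (1 - u))⁻¹| ≤ |b - u| / δ ^ 4 := by
  have hbχ : δ ^ 2 ≤ b * (1 - b) := by nlinarith
  have huχ : δ ^ 2 ≤ u * (1 - u) := by nlinarith
  have hχ : δ ^ 4 ≤ b * (1 - b) * (u * (1 - u)) := by
    calc δ ^ 4 = δ ^ 2 * δ ^ 2 := by ring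
      _ ≤ _ := mul_le_mul hbχ huχ (by positivity) (by linarith [pow_pos hδ 2])
  have hmid : |1 - u - b| ≤ 1 := abs_le.2 ⟨by linarith, by linarith⟩
  rw [inv_sub_inv (by nlinarith [pow_pos hδ 2]) (by nlinarith [pow_pos hδ 2]),
    show u * (1 - u) - b * (1 - b) = (u - b) * (1 - u - b) by ring, abs_div, abs_mul,
    abs_sub_comm u b,
    abs_of_pos (by nlinarith [pow_pos hδ 4] : 0 < b * (1 - b) * (u * (1 - u)))]
  calc |b - u| * |1 - u - b| / (b * (1 - b) * (u * (1 - u)))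
      ≤ |b - u| * 1 / δ ^ 4 := by gcongr
    _ = |b - u| / δ ^ 4 := by rw [mul_one]

theorem abs_bernoulliKL_perturb_sub_le {δ M κ u u₁ u₂ : ℝ} (hδ : 0 < δ) (hu : δ ≤ u)
    (hu' : u ≤ 1 - δ) (h₁ : |u₁| ≤ M) (h₂ : |u₂| ≤ M) (hκ : 0 ≤ κ) (hκM : κ * (8 * M) ≤ δ) :
    |bernoulliKL (u + κ * u₂) (u + κ * u₁) - κ ^ 2 / 2 * ((u₂ - u₁) ^ 2 / (u * (1 - u)))|
      ≤ (384 / δ ^ 3 + 32 / δ ^ 4) * M ^ 3 * κ ^ 3 := by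
  set b := u + κ * u₁
  set s := κ * (u₂ - u₁)
  have hM : 0 ≤ M := (abs_nonneg _).trans h₁
  have hbu : |b - u| ≤ κ * M := by
    rw [show b - u = κ * u₁ by ring, abs_mul, abs_of_nonneg hκ]
    exact mul_le_mul_of_nonneg_left h₁ hκ
  have hs : |s| ≤ 2 * M * κ := by
    rw [abs_mul, abs_of_nonneg hκ]
    nlinarith [abs_sub u₂ u₁]
  have hbu' := abs_le.1 hbu
  have hb₀ : δ / 2 ≤ b := by nlinarith
  have hb₁ : b ≤ 1 - δ / 2 := by nlinarith
  have hp : |s / b| ≤ 4 * M * κ / δ := by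
    rw [abs_div, abs_of_pos (show 0 < b by linarith), div_le_div_iff₀ (by linarith) hδ]
    nlinarith [abs_nonneg s]
  have hq : |s / (1 - b)| ≤ 4 * M * κ / δ := by
    rw [abs_div, abs_of_pos (show 0 < 1 - b by linarith), div_le_div_iff₀ (by linarith) hδ]
    nlinarith [abs_nonneg s]
  have hsmall : 4 * M * κ / δ ≤ 1 / 2 := by
    rw [div_le_iff₀ hδ]; linarith
  have hKL := abs_bernoulliKL_add_sub_le (b := b) (s := s) (by linarith) (by linarith)
    (hp.trans hsmall) (hq.trans hsmall)
  have hχ := abs_inv_mul_one_sub_sub_inv_mul_one_sub_le (u := u) (by positivity : 0 < δ / 2)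
    hb₀ hb₁ (by linarith) (by linarith)
  have hsplit : bernoulliKL (u + κ * u₂) (u + κ * u₁)
        - κ ^ 2 / 2 * ((u₂ - u₁) ^ 2 / (u * (1 - u)))
      = (bernoulliKL (b + s) b - s ^ 2 / 2 * (b * (1 - b))⁻¹)
        + s ^ 2 / 2 * ((b * (1 - b))⁻¹ - (u * (1 - u))⁻¹) := by
    simp only [b, s]; ring_nf
  have hcubic : |bernoulliKL (b + s) b - s ^ 2 / 2 * (b * (1 - b))⁻¹|
      ≤ 384 / δ ^ 3 * M ^ 3 * κ ^ 3 :=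
    calc _ ≤ 3 * (|s / b| ^ 3 + |s / (1 - b)| ^ 3) := hKL
      _ ≤ 3 * ((4 * M * κ / δ) ^ 3 + (4 * M * κ / δ) ^ 3) := by gcongr
      _ = 384 / δ ^ 3 * M ^ 3 * κ ^ 3 := by field_simp; ring
  have hquad : |s ^ 2 / 2 * ((b * (1 - b))⁻¹ - (u * (1 - u))⁻¹)|
      ≤ 32 / δ ^ 4 * M ^ 3 * κ ^ 3 :=
    calc _ = |s| ^ 2 / 2 * |(b * (1 - b))⁻¹ - (u * (1 - u))⁻¹| := by
          rw [abs_mul, abs_div, abs_two, sq_abs, abs_pow, sq_abs]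
      _ ≤ (2 * M * κ) ^ 2 / 2 * (κ * M / (δ / 2) ^ 4) := by
          gcongr
          exact hχ.trans (by gcongr)
      _ = 32 / δ ^ 4 * M ^ 3 * κ ^ 3 := by field_simp; ring
  rw [hsplit]
  calc _ ≤ _ := abs_add_le _ _
    _ ≤ _ := add_le_add hcubic hquad
    _ = _ := by ring

theorem exists_pos_forall_le_mul_of_eventually_le {f g : ℕ → ℝ} {C : ℝ} (hg : ∀ n, 0 < g n)
    (h : ∀ᶠ n in atTop, f n ≤ C * g n) : ∃ C₀, 0 < C₀ ∧ ∀ n, f n ≤ C₀ * g n := by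
  obtain ⟨B, hB⟩ : BddAbove (Set.range fun n => f n / g n) :=
    (isBoundedUnder_of_eventually_le
      (h.mono fun n hn => (div_le_iff₀ (hg n)).2 hn)).bddAbove_range
  refine ⟨max B 1, by positivity, fun n => ?_⟩
  rw [← div_le_iff₀ (hg n)]
  exact (hB ⟨n, rfl⟩).trans (le_max_left _ _)

/-- Relative entropy between two small perturbations of a
product Bernoulli measure. -/
theorem stmt1 {T : Type*} [Fintype T] [DecidableEq T]
    (δ M : ℝ) (hδ : 0 < δ)
    (u u₁ u₂ : T → ℝ) (κ : ℕ → ℝ)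
    (hu : ∀ x, δ ≤ u x ∧ u x ≤ 1 - δ)
    (hu₁ : ∀ x, |u₁ x| ≤ M) (hu₂ : ∀ x, |u₂ x| ≤ M)
    (hκpos : ∀ n, 0 < κ n)
    (hκ : Filter.Tendsto κ Filter.atTop (nhds 0))
    (hrange : ∀ n x, (0 < u x + κ n * u₁ x ∧ u x + κ n * u₁ x < 1) ∧
                     (0 < u x + κ n * u₂ x ∧ u x + κ n * u₂ x < 1)) :
    ∃ C₀ : ℝ, 0 < C₀ ∧ ∀ n : ℕ,
      |(∑ η : T → Bool,
          (∏ x, (if η x then u x + κ n * u₂ x else 1 - (u x + κ n * u₂ x))) *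
            Real.log ((∏ x, (if η x then u x + κ n * u₂ x else 1 - (u x + κ n * u₂ x))) /
              (∏ x, (if η x then u x + κ n * u₁ x else 1 - (u x + κ n * u₁ x)))))
        - (κ n) ^ 2 / 2 * ∑ x, (u₂ x - u₁ x) ^ 2 / (u x * (1 - u x))|
      ≤ C₀ * (κ n) ^ 3 * (Fintype.card T) := by
  rcases isEmpty_or_nonempty T with hT | hT
  · exact ⟨1, one_pos, fun n => by simp⟩
  have hsmall : ∀ᶠ n in atTop, κ n * (8 * M) ≤ δ :=
    (hκ.mul_const (8 * M)).eventually (ge_mem_nhds (by rwa [zero_mul]))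
  simp_rw [mul_assoc _ (κ _ ^ 3)]
  refine exists_pos_forall_le_mul_of_eventually_le (C := (384 / δ ^ 3 + 32 / δ ^ 4) * M ^ 3)
    (fun n => by have := hκpos n; positivity) ?_
  filter_upwards [hsmall] with n hn
  rw [sum_prod_mul_log_div_prod_eq_sum_bernoulliKL _ _ (fun x => (hrange n x).2)
    (fun x => (hrange n x).1), mul_sum, ← sum_sub_distrib]
  calc _ ≤ ∑ x, |bernoulliKL (u x + κ n * u₂ x) (u x + κ n * u₁ x)
          - κ n ^ 2 / 2 * ((u₂ x - u₁ x) ^ 2 / (u x * (1 - u x)))| := abs_sum_le_sum_abs _ _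
    _ ≤ ∑ _x : T, (384 / δ ^ 3 + 32 / δ ^ 4) * M ^ 3 * κ n ^ 3 :=
        sum_le_sum fun x _ => abs_bernoulliKL_perturb_sub_le hδ (hu x).1 (hu x).2 (hu₁ x)
          (hu₂ x) (hκpos n).le hn
    _ = _ := by rw [sum_const, card_univ, nsmul_eq_mul]; ring
end
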